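/- Let φ : [1,∞) → ℝ be measurable with sup_{ρ≥1} |ρ φ(ρ)| ≤ K for some K > 0. For r ≥ 1, t > 0 define (S₁(t)φ)(r) = (1/(r√(4πt))) ∫₁^∞ (e^{-(r-ρ)²/(4t)} − e^{-(r+ρ-2)²/(4t)}) ρ φ(ρ) dρ. Then |(S₁(t)φ)(r)| ≤ ((r−1) K)/(r√(πt)) for every r > 1 and t > 0. -/

import Mathlib

open Real MeasureTheory

/-- The radially symmetric Dirichlet heat semigroup on ℝ³ \ B₁(0). -/
noncomputable def S1 (φ : ℝ → ℝ) (t r : ℝ) : ℝ :=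
  (1 / (r * Real.sqrt (4 * π * t))) *
    ∫ ρ in Set.Ioi (1:ℝ),
      (Real.exp (-(r - ρ) ^ 2 / (4 * t)) - Real.exp (-(r + ρ - 2) ^ 2 / (4 * t))) * (ρ * φ ρ)

/-! The image term `exp (-(r + ρ - 2)² / 4t)` is the Gaussian centred at `r` shifted by
`2(r - 1)`, so the kernel integrates over `ρ > 1` to the mass of that Gaussian on an interval
of length `2(r - 1)`, which is at most `2(r - 1)` because the Gaussian is bounded by `1`.
Since the kernel is nonnegative for `r, ρ ≥ 1`, this gives `|∫ kernel · ρφ| ≤ 2(r - 1) K`,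
and the prefactor `1 / (r √(4πt)) = 1 / (2 r √(πt))` finishes the estimate. -/

open Set

lemma integrable_exp_neg_sq_sub_div {s : ℝ} (hs : 0 < s) (c : ℝ) :
    Integrable (fun x : ℝ => exp (-(x - c) ^ 2 / s)) := by
  convert (integrable_exp_neg_mul_sq (inv_pos.2 hs)).comp_sub_right c using 2 with x
  ring_nf

lemma setIntegral_Ioi_comp_add_right (g : ℝ → ℝ) (a h : ℝ) :
    ∫ x in Ioi a, g (x + h) = ∫ x in Ioi (a + h), g x := by
  have := (measurePreserving_add_right volume h).setIntegral_preimage_emb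
    (measurableEmbedding_addRight h) g (Ioi (a + h))
  rwa [preimage_add_const_Ioi, add_sub_cancel_right] at this

lemma setIntegral_Ioi_sub_comp_add_le {g : ℝ → ℝ} (hg : Integrable g)
    (hg_le : ∀ x, g x ≤ 1) (a : ℝ) {h : ℝ} (hh : 0 ≤ h) :
    ∫ x in Ioi a, (g x - g (x + h)) ≤ h := by
  rw [integral_sub hg.integrableOn (hg.comp_add_right h).integrableOn,
    setIntegral_Ioi_comp_add_right, ← intervalIntegral.integral_interval_add_Ioi hg.integrableOn
      hg.integrableOn, add_sub_cancel_right]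
  calc ∫ x in a..a + h, g x ≤ ∫ _ in a..a + h, (1 : ℝ) :=
        intervalIntegral.integral_mono_on (by linarith) hg.intervalIntegrable
          intervalIntegrable_const fun x _ => hg_le x
    _ = h := by simp

section Kernel

variable {r t : ℝ}

lemma exp_neg_sq_image_le (hr : 1 ≤ r) (ht : 0 ≤ t) {ρ : ℝ} (hρ : 1 ≤ ρ) :
    exp (-(r + ρ - 2) ^ 2 / (4 * t)) ≤ exp (-(r - ρ) ^ 2 / (4 * t)) := by
  have hsq : (r - ρ) ^ 2 ≤ (r + ρ - 2) ^ 2 := by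
    nlinarith [mul_nonneg (sub_nonneg.2 hr) (sub_nonneg.2 hρ)]
  gcongr

lemma integral_Ioi_one_heatKernel_le (hr : 1 ≤ r) (ht : 0 < t) :
    ∫ ρ in Ioi (1 : ℝ), (exp (-(r - ρ) ^ 2 / (4 * t)) - exp (-(r + ρ - 2) ^ 2 / (4 * t)))
      ≤ 2 * (r - 1) := by
  have h := setIntegral_Ioi_sub_comp_add_le
    (integrable_exp_neg_sq_sub_div (s := 4 * t) (by positivity) r)
    (fun _ => exp_le_one_iff.2 (div_nonpos_of_nonpos_of_nonneg (neg_nonpos.2 (sq_nonneg _))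
      (by positivity))) 1 (h := 2 * (r - 1)) (by linarith)
  convert h using 3 with ρ
  ring_nf

lemma abs_integral_Ioi_one_heatKernel_mul_le (hr : 1 ≤ r) (ht : 0 < t) {f : ℝ → ℝ} {K : ℝ}
    (hf : ∀ ρ, 1 ≤ ρ → |f ρ| ≤ K) :
    |∫ ρ in Ioi (1 : ℝ),
        (exp (-(r - ρ) ^ 2 / (4 * t)) - exp (-(r + ρ - 2) ^ 2 / (4 * t))) * f ρ|
      ≤ 2 * (r - 1) * K := by
  set k : ℝ → ℝ := fun ρ => exp (-(r - ρ) ^ 2 / (4 * t)) - exp (-(r + ρ - 2) ^ 2 / (4 * t))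
  have hk : Integrable k := by
    have h4t : 0 < 4 * t := by positivity
    refine ((integrable_exp_neg_sq_sub_div h4t r).sub
      (integrable_exp_neg_sq_sub_div h4t (2 - r))).congr (.of_forall fun ρ => ?_)
    simp only [k, Pi.sub_apply]
    ring_nf
  have hk_nonneg : ∀ ρ ∈ Ioi (1 : ℝ), 0 ≤ k ρ := fun ρ hρ =>
    sub_nonneg.2 (exp_neg_sq_image_le hr ht.le (le_of_lt hρ))
  have hK : 0 ≤ K := (abs_nonneg _).trans (hf 1 le_rfl)
  calc |∫ ρ in Ioi (1 : ℝ), k ρ * f ρ| ≤ ∫ ρ in Ioi (1 : ℝ), |k ρ * f ρ| :=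
        abs_integral_le_integral_abs
    _ ≤ ∫ ρ in Ioi (1 : ℝ), k ρ * K := by
        refine integral_mono_of_nonneg (.of_forall fun _ => abs_nonneg _)
          (hk.mul_const K).integrableOn ((ae_restrict_iff' measurableSet_Ioi).2 (.of_forall ?_))
        intro ρ hρ
        dsimp only
        rw [abs_mul, abs_of_nonneg (hk_nonneg ρ hρ)]
        exact mul_le_mul_of_nonneg_left (hf ρ (le_of_lt hρ)) (hk_nonneg ρ hρ)
    _ = (∫ ρ in Ioi (1 : ℝ), k ρ) * K := integral_mul_const _ _
    _ ≤ 2 * (r - 1) * K := mul_le_mul_of_nonneg_right (integral_Ioi_one_heatKernel_le hr ht) hK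

end Kernel

lemma sqrt_four_mul_pi_mul (t : ℝ) : √(4 * π * t) = 2 * √(π * t) := by
  rw [mul_assoc, sqrt_mul (by norm_num), show (4 : ℝ) = 2 ^ 2 by norm_num, sqrt_sq (by norm_num)]

theorem stmt_7_general (φ : ℝ → ℝ) (K : ℝ)
    (hφ : ∀ ρ, 1 ≤ ρ → |ρ * φ ρ| ≤ K) :
    ∀ r t : ℝ, 1 < r → 0 < t →
      |S1 φ t r| ≤ (r - 1) * K / (r * Real.sqrt (π * t)) := by
  intro r t hr ht
  have hint := abs_integral_Ioi_one_heatKernel_mul_le hr.le ht hφ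
  have hr0 : 0 < r := by linarith
  have hs : 0 < √(π * t) := sqrt_pos.2 (by positivity)
  rw [S1, abs_mul, abs_of_nonneg (by positivity), sqrt_four_mul_pi_mul]
  calc 1 / (r * (2 * √(π * t))) * |∫ ρ in Ioi (1 : ℝ),
        (exp (-(r - ρ) ^ 2 / (4 * t)) - exp (-(r + ρ - 2) ^ 2 / (4 * t))) * (ρ * φ ρ)|
      ≤ 1 / (r * (2 * √(π * t))) * (2 * (r - 1) * K) := by gcongr
    _ = (r - 1) * K / (r * √(π * t)) := by field_simp

theorem stmt_7 (φ : ℝ → ℝ) (hφm : Measurable φ) (K : ℝ) (hK : 0 < K)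
    (hφ : ∀ ρ, 1 ≤ ρ → |ρ * φ ρ| ≤ K) :
    ∀ r t : ℝ, 1 < r → 0 < t →
      |S1 φ t r| ≤ (r - 1) * K / (r * Real.sqrt (π * t)) :=
  stmt_7_general φ K hφ
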